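/- Let p_n be a monic real polynomial of degree n with simple real zeros y_1 < ⋯ < y_n and let p_{n−1} be a monic real polynomial of degree n−1 whose zeros are real, simple, and interlace with those of p_n (exactly one zero of p_{n−1} lies strictly between each pair of consecutive zeros of p_n). Then there exist weights w_1, …, w_n with w_j > 0 for all j and Σ_{j=1}^n w_j = 1 such that p_{n−1}(z)/p_n(z) = Σ_{j=1}^n w_j/(z − y_j) for every z ∈ ℂ \ {y_1,…,y_n}. -/

import Mathlib

open Filter Topology Polynomial

/-- Argument in `[0, 2π)`. -/
noncomputable def argNN (z : ℂ) : ℝ :=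
  if Complex.arg z < 0 then Complex.arg z + 2 * Real.pi else Complex.arg z

/-- Square root with branch cut along the positive real axis:
`ρ e^{iθ} ↦ ρ^{1/2} e^{iθ/2}` with `θ ∈ [0, 2π)`. -/
noncomputable def csqrt (z : ℂ) : ℂ :=
  ((‖z‖ ^ ((1 : ℝ) / 2) : ℝ) : ℂ) * Complex.exp (Complex.I * (argNN z : ℂ) / 2)

/-- Principal cube root: `ρ e^{iθ} ↦ ρ^{1/3} e^{iθ/3}` with `θ ∈ (−π, π]`. -/
noncomputable def ccbrt (z : ℂ) : ℂ :=
  ((‖z‖ ^ ((1 : ℝ) / 3) : ℝ) : ℂ) * Complex.exp (Complex.I * (Complex.arg z : ℂ) / 3)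

/-- `ω₃ = e^{2πi/3}`. -/
noncomputable def ω₃ : ℂ := Complex.exp (2 * (Real.pi : ℂ) * Complex.I / 3)

/-- The function `φ` from the paper. -/
noncomputable def phi (z : ℂ) : ℂ :=
  (27 / 4) * ((3 * ω₃ / 2) * ccbrt z *
    (ω₃ * ccbrt (-1 + csqrt (1 - z)) + ccbrt (-1 - csqrt (1 - z))) - 1)

/-- The density `w` of the measure `υ_{[0,1]}`. -/
noncomputable def w (x : ℝ) : ℝ :=
  (Real.sqrt 3 / (4 * Real.pi)) *
    (((1 + Real.sqrt (1 - x)) ^ ((1 : ℝ) / 3) + (1 - Real.sqrt (1 - x)) ^ ((1 : ℝ) / 3)) /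
      (x ^ ((2 : ℝ) / 3) * Real.sqrt (1 - x)))

/-!
Since `deg q < n`, Lagrange interpolation at the zeros of `p = ∏ (X - y_j)` gives
`q / p = ∑ w_j / (z - y_j)` with `w_j = q(y_j) / p'(y_j)`, and `∑ w_j` is the coefficient of
`X^{n-1}` in `q`, namely `1`. Exactly `n - 1 - j` zeros of `q` and `n - 1 - j` zeros of `p`
lie to the right of `y_j`, so `q(y_j)` and `p'(y_j) = ∏_{k ≠ j} (y_j - y_k)` have the same sign
and `w_j > 0`.
-/

open Finset

namespace Lagrange

variable {K : Type*} [Field K] {ι : Type*} {s : Finset ι} {v : ι → K}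

theorem eq_nodal_of_monic_of_eval_eq_zero {f : K[X]} (hvs : Set.InjOn v s) (hf : f.Monic)
    (hdeg : f.natDegree = #s) (hroot : ∀ i ∈ s, f.eval (v i) = 0) : f = nodal s v := by
  have hdegree : f.degree = #s := by rw [degree_eq_natDegree hf.ne_zero, hdeg]
  refine eq_of_degree_le_of_eval_index_eq s hvs hdegree.le (by rw [hdegree, degree_nodal]) ?_ ?_
  · rw [hf.leadingCoeff, nodal_monic.leadingCoeff]
  · intro i hi
    rw [hroot i hi, eval_nodal_at_node hi]

theorem aeval_nodal {L : Type*} [CommRing L] [Algebra K L] (z : L) :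
    aeval z (nodal s v) = ∏ i ∈ s, (z - algebraMap K L (v i)) := by
  simp [nodal, map_prod]

variable [DecidableEq ι]

theorem sum_eval_mul_nodalWeight {f : K[X]} (hvs : Set.InjOn v s) (hf : f.degree < #s) :
    ∑ i ∈ s, f.eval (v i) * nodalWeight s v i = f.coeff (#s - 1) := by
  simp only [coeff_eq_sum hvs hf, nodalWeight, prod_inv_distrib, div_eq_mul_inv]

theorem aeval_div_aeval_nodal {L : Type*} [Field L] [Algebra K L] {f : K[X]}
    (hvs : Set.InjOn v s) (hf : f.degree < #s) {z : L}
    (hz : ∀ i ∈ s, z ≠ algebraMap K L (v i)) :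
    aeval z f / aeval z (nodal s v) =
      ∑ i ∈ s,
        algebraMap K L (f.eval (v i) * nodalWeight s v i) / (z - algebraMap K L (v i)) := by
  conv_lhs => rw [eq_interpolate hvs hf, interpolate_eq_nodalWeight_mul_nodal_div_X_sub_C,
    map_sum, sum_div]
  refine sum_congr rfl fun i hi => ?_
  have hrest : aeval z (nodal (s.erase i) v) ≠ 0 := by
    rw [aeval_nodal, prod_ne_zero_iff]
    exact fun j hj => sub_ne_zero.mpr (hz j (mem_of_mem_erase hj))
  rw [← nodal_erase_eq_nodal_div hi, nodal_eq_mul_nodal_erase hi]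
  simp only [map_mul, aeval_C, map_sub, aeval_X]
  field_simp

end Lagrange

open Lagrange

theorem Finset.neg_one_pow_card_filter_lt_mul_prod_sub_pos {ι R : Type*} [CommRing R]
    [LinearOrder R] [IsStrictOrderedRing R] (s : Finset ι) (a : ι → R) {x : R}
    (h : ∀ i ∈ s, a i ≠ x) : 0 < (-1) ^ #{i ∈ s | x < a i} * ∏ i ∈ s, (x - a i) := by
  rw [← prod_filter_mul_prod_filter_not s (fun i => x < a i), ← mul_assoc, ← prod_neg]
  refine mul_pos (prod_pos fun i hi => ?_) (prod_pos fun i hi => ?_)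
  · simpa using (mem_filter.mp hi).2
  · obtain ⟨his, hxi⟩ := mem_filter.mp hi
    exact sub_pos.mpr ((not_lt.mp hxi).lt_of_ne (h i his))

theorem StrictMonoOn.card_filter_erase_lt {α : Type*} [LinearOrder α] {n j : ℕ} {y : ℕ → α}
    (hy : StrictMonoOn y (Set.Iio n)) (hj : j < n) :
    #{k ∈ (range n).erase j | y j < y k} = n - 1 - j := by
  rw [show n - 1 - j = n - j - 1 by omega, ← Nat.card_Ioo j n]
  congr 1
  ext k
  simp only [mem_filter, mem_erase, mem_range, mem_Ioo]
  exact ⟨fun ⟨⟨_, hk⟩, hlt⟩ => ⟨(hy.lt_iff_lt hj hk).mp hlt, hk⟩,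
    fun ⟨hjk, hk⟩ => ⟨⟨hjk.ne', hk⟩, hy hj hk hjk⟩⟩

section Interlacing

variable {α : Type*} [LinearOrder α] {n : ℕ} {y y' : ℕ → α}
  (hy : StrictMonoOn y (Set.Iio n)) (hinterlace : ∀ i < n - 1, y i < y' i ∧ y' i < y (i + 1))
include hy hinterlace

theorem lt_interlaced_of_le {i j : ℕ} (hi : i < n - 1) (hji : j ≤ i) : y j < y' i :=
  (hy.monotoneOn (by simp; omega) (by simp; omega) hji).trans_lt (hinterlace i hi).1

theorem interlaced_lt_of_lt {i j : ℕ} (hj : j < n) (hij : i < j) : y' i < y j :=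
  (hinterlace i (by omega)).2.trans_le (hy.monotoneOn (by simp; omega) hj hij)

theorem card_filter_lt_interlaced {j : ℕ} (hj : j < n) :
    #{i ∈ range (n - 1) | y j < y' i} = n - 1 - j := by
  rw [← Nat.card_Ico j (n - 1)]
  congr 1
  ext i
  simp only [mem_filter, mem_range, mem_Ico]
  exact ⟨fun ⟨hi, hlt⟩ =>
      ⟨not_lt.mp fun hij => (interlaced_lt_of_lt hy hinterlace hj hij).not_gt hlt, hi⟩,
    fun ⟨hji, hi⟩ => ⟨hi, lt_interlaced_of_le hy hinterlace hi hji⟩⟩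

end Interlacing

theorem eval_nodal_mul_nodalWeight_pos {R : Type*} [Field R] [LinearOrder R]
    [IsStrictOrderedRing R] {n j : ℕ} {y y' : ℕ → R} (hy : StrictMonoOn y (Set.Iio n))
    (hinterlace : ∀ i < n - 1, y i < y' i ∧ y' i < y (i + 1)) (hj : j < n) :
    0 < (nodal (range (n - 1)) y').eval (y j) * nodalWeight (range n) y j := by
  have hq_sign := (range (n - 1)).neg_one_pow_card_filter_lt_mul_prod_sub_pos y' (x := y j)
    fun i hi => (lt_or_ge i j).elim (fun hij => (interlaced_lt_of_lt hy hinterlace hj hij).ne)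
      fun hji => (lt_interlaced_of_le hy hinterlace (mem_range.mp hi) hji).ne'
  have hdp_sign := ((range n).erase j).neg_one_pow_card_filter_lt_mul_prod_sub_pos y (x := y j)
    fun k hk => hy.injOn.ne (mem_range.mp (mem_of_mem_erase hk)) hj (ne_of_mem_erase hk)
  rw [card_filter_lt_interlaced hy hinterlace hj] at hq_sign
  rw [hy.card_filter_erase_lt hj] at hdp_sign
  rw [eval_nodal, nodalWeight_eq_eval_nodal_erase_inv, eval_nodal, ← div_eq_mul_inv, div_pos_iff,
    ← mul_pos_iff]
  calc (0 : R) < (-1) ^ (n - 1 - j) * _ * ((-1) ^ (n - 1 - j) * _) := mul_pos hq_sign hdp_sign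
    _ = _ := by rw [mul_mul_mul_comm, ← mul_pow, neg_one_mul, neg_neg, one_pow, one_mul]

/-- the ratio `q/p` of monic polynomials with interlacing real simple zeros
is a convex combination of the simple fractions `1/(z - y_j)`. -/
theorem ratio_partial_fractions (n : ℕ) (hn : 1 ≤ n) (p q : Polynomial ℝ)
    (hp : p.Monic) (hpdeg : p.natDegree = n)
    (hq : q.Monic) (hqdeg : q.natDegree = n - 1)
    (y y' : ℕ → ℝ)
    (hyroot : ∀ j < n, p.eval (y j) = 0)
    (hymono : ∀ j k : ℕ, j < k → k < n → y j < y k)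
    (hy'root : ∀ j < n - 1, q.eval (y' j) = 0)
    (hy'mono : ∀ j k : ℕ, j < k → k < n - 1 → y' j < y' k)
    (hinterlace : ∀ j < n - 1, y j < y' j ∧ y' j < y (j + 1)) :
    ∃ wt : ℕ → ℝ, (∀ j < n, 0 < wt j) ∧ (∑ j ∈ Finset.range n, wt j) = 1 ∧
      ∀ z : ℂ, (∀ j < n, z ≠ (y j : ℂ)) →
        Polynomial.aeval z q / Polynomial.aeval z p
          = ∑ j ∈ Finset.range n, (wt j : ℂ) / (z - (y j : ℂ)) := by
  have hy : StrictMonoOn y (Set.Iio n) := fun j _ k hk hjk => hymono j k hjk hk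
  have hinj : Set.InjOn y (range n) := by rw [coe_range]; exact hy.injOn
  have hinj' : Set.InjOn y' (range (n - 1)) := by
    rw [coe_range]
    exact StrictMonoOn.injOn fun j _ k hk hjk => hy'mono j k hjk hk
  have hp' : p = nodal (range n) y := eq_nodal_of_monic_of_eval_eq_zero hinj hp
    (by rw [hpdeg, card_range]) fun j hj => hyroot j (mem_range.mp hj)
  have hq' : q = nodal (range (n - 1)) y' := eq_nodal_of_monic_of_eval_eq_zero hinj' hq
    (by rw [hqdeg, card_range]) fun j hj => hy'root j (mem_range.mp hj)
  have hqdeg_lt : q.degree < #(range n) := by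
    rw [degree_eq_natDegree hq.ne_zero, hqdeg, card_range]
    exact_mod_cast Nat.sub_lt hn one_pos
  refine ⟨fun j => q.eval (y j) * nodalWeight (range n) y j, fun j hj => ?_, ?_, fun z hz => ?_⟩
  · rw [hq']
    exact eval_nodal_mul_nodalWeight_pos hy hinterlace hj
  · rw [sum_eval_mul_nodalWeight hinj hqdeg_lt, card_range, ← hqdeg, hq.coeff_natDegree]
  · rw [hp', aeval_div_aeval_nodal hinj hqdeg_lt fun j hj => hz j (mem_range.mp hj)]
    rfl
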